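/- Every colored tree t in the set B^m (planar binary rooted trees with internal vertices colored by *_0,...,*_m such that each left subtree's root color strictly exceeds the color of its parent) admits a unique decomposition t = ((( | ∨_{*_{i_1}} w^1) ∨_{*_{i_2}} w^2) ... ) ∨_{*_{i_r}} w^r with w^1,...,w^r ∈ B^m and i_1 > i_2 > ... > i_r. -/
import Mathlib


inductive CTree : Type
  | leaf : CTree
  | node : ℕ → CTree → CTree → CTree

def CTree.leftOK (i : ℕ) : CTree → Prop
  | .leaf => True
  | .node j _ _ => i < j

/-- Membership in `B^m`: every internal vertex colored by `{0,…,m}` and the left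
subtree's root color strictly exceeds the color of its parent. -/
def CTree.Good (m : ℕ) : CTree → Prop
  | .leaf => True
  | .node i l r => i ≤ m ∧ CTree.leftOK i l ∧ l.Good m ∧ r.Good m

/-- `combRev [(i_r, w_r), …, (i_1, w_1)]` is the left comb
`(((| ∨_{i_1} w_1) ∨_{i_2} w_2) … ) ∨_{i_r} w_r`. -/
def combRev : List (ℕ × CTree) → CTree
  | [] => .leaf
  | (i, w) :: rest => .node i (combRev rest) w

def CTree.spine : CTree → List (ℕ × CTree)
  | .leaf => []
  | .node i l r => (i, r) :: l.spine

lemma combRev_spine : ∀ t : CTree, combRev t.spine = t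
  | .leaf => rfl
  | .node i l r => by simp [CTree.spine, combRev, combRev_spine l]

lemma combRev_inj : ∀ l l' : List (ℕ × CTree), combRev l = combRev l' → l = l'
  | [], [], _ => rfl
  | [], (i, w) :: r, h => by simp [combRev] at h
  | (i, w) :: r, [], h => by simp [combRev] at h
  | (i, w) :: r, (i', w') :: r', h => by
    simp only [combRev, CTree.node.injEq] at h
    obtain ⟨h1, h2, h3⟩ := h
    rw [h1, h3, combRev_inj r r' h2]

lemma spine_props (m : ℕ) : ∀ t : CTree, t.Good m →
    (∀ p ∈ t.spine, p.1 ≤ m ∧ p.2.Good m) ∧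
      (t.spine.map Prod.fst).Pairwise (· < ·)
  | .leaf, _ => by simp [CTree.spine]
  | .node i l r, h => by
    obtain ⟨him, hlo, hl, hr⟩ := h
    obtain ⟨hmem, hpw⟩ := spine_props m l hl
    refine ⟨?_, ?_⟩
    · rintro p hp
      rcases List.mem_cons.1 hp with rfl | hp
      · exact ⟨him, hr⟩
      · exact hmem p hp
    · simp only [CTree.spine, List.map_cons, List.pairwise_cons]
      refine ⟨?_, hpw⟩
      intro a ha
      -- a is a color in spine of l; head of spine l (if any) is > i, rest > head
      cases l with
      | leaf => simp [CTree.spine] at ha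
      | node j ll lr =>
        have hij : i < j := hlo
        simp only [CTree.spine, List.map_cons, List.mem_cons] at ha
        rcases ha with rfl | ha
        · exact hij
        · have := (List.pairwise_cons.1 hpw).1 a ha
          omega

/-- Every tree `t ∈ B^m` admits a unique decomposition
`t = (((| ∨_{i_1} w^1) ∨_{i_2} w^2) … ) ∨_{i_r} w^r` with `w^1,…,w^r ∈ B^m` and
`i_1 > i_2 > … > i_r` (all colors `≤ m`). -/
theorem comb_decomposition (m : ℕ) (t : CTree) (ht : t.Good m) :
    ∃! l : List (ℕ × CTree),
      combRev l = t ∧ (∀ p ∈ l, p.1 ≤ m ∧ p.2.Good m)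
        ∧ (l.map Prod.fst).Pairwise (· < ·) := by
  obtain ⟨hmem, hpw⟩ := spine_props m t ht
  exact ⟨t.spine, ⟨combRev_spine t, hmem, hpw⟩,
    fun y hy => combRev_inj y t.spine (by rw [hy.1, combRev_spine])⟩
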